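/- arXiv:2103.11371 — 2 statements merged into one kernel-verified Lean document; each statement's English description precedes it below -/
import Mathlib

section
/- Let A ∈ ℝ^{m×n} be a nonzero matrix with singular value decomposition A = U Σ Vᵀ, where the singular values σ₁ ≥ σ₂ ≥ ... ≥ σ_p ≥ 0 (p = min{m,n}) are ordered nonincreasingly, U = [u₁,...,u_m] and V = [v₁,...,v_n] orthogonal. Then B = σ₁ u₁ v₁ᵀ minimizes ‖A − B‖² over all rank-one matrices B ∈ ℝ^{m×n}, and the minimum value equals ∑_{i=2}^p σᵢ². -/
/-! Orthogonal `U` and `V` preserve the Frobenius norm, so `‖A - B₁‖² = ∑_{i ≥ 1} σᵢ² = ‖A‖² - σ₀²`.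
For a rank-one `c dᵀ`, choosing each `cᵢ` optimally is a projection of row `i` of `A` onto `d`,
whence `‖A - c dᵀ‖² ≥ ‖A‖² - ‖A d‖² / ‖d‖²`; and `‖A d‖ ≤ σ₀ ‖d‖` because `AᵀA = V (ΣᵀΣ) Vᵀ` with
`ΣᵀΣ` diagonal with entries at most `σ₀²`. -/

open Matrix BigOperators

noncomputable section

/-- Squared Frobenius norm of a real matrix. -/
def frobSq {m n : Type*} [Fintype m] [Fintype n] (A : Matrix m n ℝ) : ℝ :=
  ∑ i, ∑ j, (A i j) ^ 2

/-- A rank-one matrix: a nonzero outer product `c dᵀ`. -/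
def rankOne {m n : Type*} [Fintype m] [Fintype n] (B : Matrix m n ℝ) : Prop :=
  B ≠ 0 ∧ ∃ (c : m → ℝ) (d : n → ℝ), B = Matrix.of fun i j => c i * d j

def rectDiag (a b : ℕ) (σ : ℕ → ℝ) : Matrix (Fin a) (Fin b) ℝ :=
  of fun i j => if (i : ℕ) = j then σ i else 0

@[simp]
lemma rectDiag_zero (a b : ℕ) : rectDiag a b 0 = 0 := by
  ext
  simp [rectDiag]

lemma rectDiag_sub (a b : ℕ) (σ τ : ℕ → ℝ) :
    rectDiag a b σ - rectDiag a b τ = rectDiag a b (σ - τ) := by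
  ext i j
  by_cases h : (i : ℕ) = j <;> simp [rectDiag, h]

lemma rectDiag_single_zero (a b : ℕ) (s : ℝ) :
    rectDiag (a + 1) (b + 1) (Pi.single 0 s) = vecMulVec (Pi.single 0 s) (Pi.single 0 1) := by
  ext i j
  rcases Fin.eq_zero_or_eq_succ i with rfl | ⟨i, rfl⟩ <;>
    rcases Fin.eq_zero_or_eq_succ j with rfl | ⟨j, rfl⟩ <;> simp [rectDiag, vecMulVec_apply]

lemma transpose_rectDiag_mul_self (a b : ℕ) (σ : ℕ → ℝ) :
    (rectDiag a b σ)ᵀ * rectDiag a b σ =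
      diagonal fun j : Fin b => if (j : ℕ) < a then σ j ^ 2 else 0 := by
  ext i j
  simp only [mul_apply, transpose_apply, rectDiag, of_apply]
  rw [Fin.sum_univ_eq_sum_range
    (fun k => (if k = i then σ k else 0) * (if k = j then σ k else 0))]
  by_cases h : i = j
  · subst h; simp [diagonal, ← sq]
  · simp [diagonal, h, Fin.val_ne_of_ne (Ne.symm h)]

lemma frobSq_eq_trace {m n : Type*} [Fintype m] [Fintype n] (A : Matrix m n ℝ) :
    frobSq A = trace (Aᵀ * A) := by
  simp only [frobSq, trace, diag, mul_apply, transpose_apply, sq]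
  exact Finset.sum_comm

lemma frobSq_eq_sum_dotProduct {m n : Type*} [Fintype m] [Fintype n] (A : Matrix m n ℝ) :
    frobSq A = ∑ i, A i ⬝ᵥ A i := by
  simp only [frobSq, dotProduct, sq]

lemma frobSq_mul_mul_transpose {k l : Type*} [Fintype k] [Fintype l] [DecidableEq k]
    [DecidableEq l] {U : Matrix k k ℝ} {V : Matrix l l ℝ} (hU : Uᵀ * U = 1) (hV : Vᵀ * V = 1)
    (N : Matrix k l ℝ) : frobSq (U * N * Vᵀ) = frobSq N := by
  have hconj : (U * N * Vᵀ)ᵀ * (U * N * Vᵀ) = V * (Nᵀ * N) * Vᵀ := by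
    simp only [transpose_mul, transpose_transpose, Matrix.mul_assoc]
    rw [← Matrix.mul_assoc Uᵀ, hU, Matrix.one_mul]
  rw [frobSq_eq_trace, frobSq_eq_trace, hconj, trace_mul_comm, ← Matrix.mul_assoc, hV,
    Matrix.one_mul]

lemma frobSq_rectDiag (a b : ℕ) (σ : ℕ → ℝ) :
    frobSq (rectDiag a b σ) = ∑ k ∈ Finset.range (min a b), σ k ^ 2 := by
  rw [frobSq_eq_trace, transpose_rectDiag_mul_self, trace_diagonal,
    Fin.sum_univ_eq_sum_range (fun j => if j < a then σ j ^ 2 else 0), ← Finset.sum_filter]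
  congr 1
  ext k
  simp [and_comm]

lemma frobSq_rectDiag_succ (a b : ℕ) (σ : ℕ → ℝ) :
    frobSq (rectDiag (a + 1) (b + 1) σ) =
      σ 0 ^ 2 + ∑ k ∈ Finset.Ico 1 (min (a + 1) (b + 1)), σ k ^ 2 := by
  rw [frobSq_rectDiag, Finset.sum_range_eq_add_Ico _ (by omega)]

lemma frobSq_rectDiag_sub_single_zero (a b : ℕ) (σ : ℕ → ℝ) :
    frobSq (rectDiag (a + 1) (b + 1) (σ - Pi.single 0 (σ 0))) =
      ∑ k ∈ Finset.Ico 1 (min (a + 1) (b + 1)), σ k ^ 2 := by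
  rw [frobSq_rectDiag_succ, Pi.sub_apply, Pi.single_eq_same, sub_self, zero_pow two_ne_zero,
    zero_add]
  refine Finset.sum_congr rfl fun k hk => ?_
  rw [Pi.sub_apply, Pi.single_eq_of_ne (Nat.one_le_iff_ne_zero.mp (Finset.mem_Ico.mp hk).1),
    sub_zero]

lemma mulVec_dotProduct_mulVec {R m n : Type*} [CommSemiring R] [Fintype m] [Fintype n]
    (M : Matrix m n R) (w : n → R) : M *ᵥ w ⬝ᵥ M *ᵥ w = w ᵥ* (Mᵀ * M) ⬝ᵥ w := by
  rw [dotProduct_mulVec, ← vecMul_transpose, vecMul_vecMul]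

lemma mulVec_dotProduct_mulVec_of_transpose_mul_self {R n : Type*} [CommSemiring R] [Fintype n]
    [DecidableEq n] {U : Matrix n n R} (hU : Uᵀ * U = 1) (w : n → R) :
    U *ᵥ w ⬝ᵥ U *ᵥ w = w ⬝ᵥ w := by
  rw [mulVec_dotProduct_mulVec, hU, vecMul_one]

lemma vecMul_diagonal_dotProduct_le {n : Type*} [Fintype n] [DecidableEq n] {e : n → ℝ} {s : ℝ}
    (he : ∀ j, e j ≤ s) (w : n → ℝ) : w ᵥ* diagonal e ⬝ᵥ w ≤ s * (w ⬝ᵥ w) := by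
  simp only [vecMul_diagonal, dotProduct, Finset.mul_sum]
  exact Finset.sum_le_sum fun j _ => by nlinarith [he j, mul_self_nonneg (w j)]

lemma rectDiag_mulVec_dotProduct_le {a b : ℕ} {σ : ℕ → ℝ} {s : ℝ} (hσ : ∀ k, σ k ^ 2 ≤ s)
    (w : Fin b → ℝ) : rectDiag a b σ *ᵥ w ⬝ᵥ rectDiag a b σ *ᵥ w ≤ s * (w ⬝ᵥ w) := by
  rw [mulVec_dotProduct_mulVec, transpose_rectDiag_mul_self]
  refine vecMul_diagonal_dotProduct_le (fun j => ?_) w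
  split_ifs
  · exact hσ j
  · exact (sq_nonneg _).trans (hσ 0)

lemma mul_rectDiag_mul_transpose_mulVec_dotProduct_le {a b : ℕ}
    {U : Matrix (Fin a) (Fin a) ℝ} {V : Matrix (Fin b) (Fin b) ℝ} (hU : Uᵀ * U = 1)
    (hV : Vᵀ * V = 1) {σ : ℕ → ℝ} {s : ℝ} (hσ : ∀ k, σ k ^ 2 ≤ s) (w : Fin b → ℝ) :
    (U * rectDiag a b σ * Vᵀ) *ᵥ w ⬝ᵥ (U * rectDiag a b σ * Vᵀ) *ᵥ w ≤ s * (w ⬝ᵥ w) := by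
  have hVt : Vᵀᵀ * Vᵀ = 1 := by rw [transpose_transpose, mul_eq_one_comm, hV]
  rw [← mulVec_mulVec, ← mulVec_mulVec, mulVec_dotProduct_mulVec_of_transpose_mul_self hU,
    ← mulVec_dotProduct_mulVec_of_transpose_mul_self hVt w]
  exact rectDiag_mulVec_dotProduct_le hσ _

lemma mul_rectDiag_single_zero_mul_transpose {a b : ℕ} (U : Matrix (Fin (a + 1)) (Fin (a + 1)) ℝ)
    (V : Matrix (Fin (b + 1)) (Fin (b + 1)) ℝ) (s : ℝ) :
    U * rectDiag (a + 1) (b + 1) (Pi.single 0 s) * Vᵀ = vecMulVec (s • U.col 0) (V.col 0) := by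
  rw [rectDiag_single_zero, mul_vecMulVec, vecMulVec_mul, vecMul_transpose, mulVec_single,
    mulVec_single_one, op_smul_eq_smul]

lemma col_ne_zero_of_transpose_mul_self_eq_one {R n : Type*} [CommSemiring R] [Nontrivial R]
    [Fintype n] [DecidableEq n] {U : Matrix n n R} (hU : Uᵀ * U = 1) (k : n) : U.col k ≠ 0 := by
  intro h
  have hkk : (Uᵀ * U) k k = U.col k ⬝ᵥ U.col k := rfl
  rw [hU, h, one_apply_eq, zero_dotProduct] at hkk
  exact one_ne_zero hkk

lemma rankOne_vecMulVec {m n : Type*} [Fintype m] [Fintype n] {c : m → ℝ} {d : n → ℝ}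
    (hc : c ≠ 0) (hd : d ≠ 0) : rankOne (vecMulVec c d) := by
  refine ⟨fun h => ?_, c, d, rfl⟩
  obtain ⟨i, hi⟩ := Function.ne_iff.mp hc
  obtain ⟨j, hj⟩ := Function.ne_iff.mp hd
  exact mul_ne_zero hi hj (congr_fun (congr_fun h i) j)

-- The right-hand side is a quadratic in `t`, minimal at `t = (r ⬝ᵥ d) / (d ⬝ᵥ d)`.
lemma dotProduct_self_sub_sq_div_le {n : Type*} [Fintype n] (r d : n → ℝ) (t : ℝ)
    (hd : 0 < d ⬝ᵥ d) : r ⬝ᵥ r - (r ⬝ᵥ d) ^ 2 / (d ⬝ᵥ d) ≤ (r - t • d) ⬝ᵥ (r - t • d) := by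
  simp only [sub_dotProduct, dotProduct_sub, smul_dotProduct, dotProduct_smul, smul_eq_mul,
    dotProduct_comm d r]
  have key : 2 * t * (r ⬝ᵥ d) - t ^ 2 * (d ⬝ᵥ d) ≤ (r ⬝ᵥ d) ^ 2 / (d ⬝ᵥ d) := by
    rw [le_div_iff₀ hd]
    nlinarith [sq_nonneg (r ⬝ᵥ d - t * (d ⬝ᵥ d))]
  nlinarith

lemma frobSq_sub_mulVec_div_le_frobSq_sub_vecMulVec {m n : Type*} [Fintype m] [Fintype n]
    (A : Matrix m n ℝ) (c : m → ℝ) (d : n → ℝ) (hd : 0 < d ⬝ᵥ d) :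
    frobSq A - (A *ᵥ d ⬝ᵥ A *ᵥ d) / (d ⬝ᵥ d) ≤ frobSq (A - vecMulVec c d) := by
  calc frobSq A - (A *ᵥ d ⬝ᵥ A *ᵥ d) / (d ⬝ᵥ d)
      = ∑ i, (A i ⬝ᵥ A i - (A i ⬝ᵥ d) ^ 2 / (d ⬝ᵥ d)) := by
        rw [Finset.sum_sub_distrib, ← Finset.sum_div, frobSq_eq_sum_dotProduct]
        simp only [dotProduct, mulVec, sq]
    _ ≤ ∑ i, (A i - c i • d) ⬝ᵥ (A i - c i • d) :=
        Finset.sum_le_sum fun i _ => dotProduct_self_sub_sq_div_le (A i) d (c i) hd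
    _ = frobSq (A - vecMulVec c d) := by
        rw [frobSq_eq_sum_dotProduct]
        rfl

lemma frobSq_sub_le_frobSq_sub_of_rankOne {m n : Type*} [Fintype m] [Fintype n]
    {A : Matrix m n ℝ} {s : ℝ} (hA : ∀ d, A *ᵥ d ⬝ᵥ A *ᵥ d ≤ s * (d ⬝ᵥ d)) {B : Matrix m n ℝ}
    (hB : rankOne B) : frobSq A - s ≤ frobSq (A - B) := by
  obtain ⟨hB0, c, d, rfl⟩ := hB
  have hd : 0 < d ⬝ᵥ d := by
    refine (Finset.sum_nonneg fun j _ => mul_self_nonneg (d j)).lt_of_ne' fun hd => hB0 ?_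
    ext
    simp [dotProduct_self_eq_zero.mp hd]
  calc frobSq A - s ≤ frobSq A - (A *ᵥ d ⬝ᵥ A *ᵥ d) / (d ⬝ᵥ d) := by
        gcongr
        exact (div_le_iff₀ hd).mpr (hA d)
    _ ≤ frobSq (A - vecMulVec c d) := frobSq_sub_mulVec_div_le_frobSq_sub_vecMulVec A c d hd

theorem rank_one_frobenius_approx_general (m n : ℕ)
    (A : Matrix (Fin (m + 1)) (Fin (n + 1)) ℝ)
    (U : Matrix (Fin (m + 1)) (Fin (m + 1)) ℝ)
    (V : Matrix (Fin (n + 1)) (Fin (n + 1)) ℝ)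
    (σ : ℕ → ℝ)
    (hU : Uᵀ * U = 1) (hV : Vᵀ * V = 1)
    (hσnonneg : ∀ i, 0 ≤ σ i)
    (hσmono : ∀ i j, i ≤ j → σ j ≤ σ i)
    (hA : A = U * (Matrix.of fun (i : Fin (m + 1)) (j : Fin (n + 1)) => if (i : ℕ) = (j : ℕ) then σ i else 0) * Vᵀ)
    (hAne : A ≠ 0)
    (B₁ : Matrix (Fin (m + 1)) (Fin (n + 1)) ℝ)
    (hB₁ : B₁ = Matrix.of fun i j => σ 0 * U i 0 * V j 0) :
    rankOne B₁ ∧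
    (∀ B : Matrix (Fin (m + 1)) (Fin (n + 1)) ℝ, rankOne B →
      frobSq (A - B₁) ≤ frobSq (A - B)) ∧
    frobSq (A - B₁) = ∑ i ∈ Finset.Ico 1 (min (m + 1) (n + 1)), (σ i) ^ 2 := by
  change A = U * rectDiag (m + 1) (n + 1) σ * Vᵀ at hA
  have hσsq (k : ℕ) : σ k ^ 2 ≤ σ 0 ^ 2 :=
    pow_le_pow_left₀ (hσnonneg k) (hσmono 0 k k.zero_le) 2
  have hσ0 : σ 0 ≠ 0 := by
    intro h0
    have hσ : σ = 0 :=
      funext fun k => le_antisymm ((hσmono 0 k k.zero_le).trans h0.le) (hσnonneg k)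
    exact hAne (by rw [hA, hσ, rectDiag_zero, Matrix.mul_zero, Matrix.zero_mul])
  have hB₁vec : B₁ = vecMulVec (σ 0 • U.col 0) (V.col 0) := by
    rw [hB₁]; ext; simp [vecMulVec_apply, mul_assoc]
  have hAB₁ : A - B₁ = U * rectDiag (m + 1) (n + 1) (σ - Pi.single 0 (σ 0)) * Vᵀ := by
    rw [hA, hB₁vec, ← mul_rectDiag_single_zero_mul_transpose, ← Matrix.sub_mul, ← Matrix.mul_sub,
      rectDiag_sub]
  have hfA : frobSq A = σ 0 ^ 2 + ∑ i ∈ Finset.Ico 1 (min (m + 1) (n + 1)), σ i ^ 2 := by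
    rw [hA, frobSq_mul_mul_transpose hU hV, frobSq_rectDiag_succ]
  have hval : frobSq (A - B₁) = ∑ i ∈ Finset.Ico 1 (min (m + 1) (n + 1)), σ i ^ 2 := by
    rw [hAB₁, frobSq_mul_mul_transpose hU hV, frobSq_rectDiag_sub_single_zero]
  refine ⟨?_, fun B hB => ?_, hval⟩
  · rw [hB₁vec]
    exact rankOne_vecMulVec (smul_ne_zero hσ0 (col_ne_zero_of_transpose_mul_self_eq_one hU 0))
      (col_ne_zero_of_transpose_mul_self_eq_one hV 0)
  · have hbound := frobSq_sub_le_frobSq_sub_of_rankOne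
      (fun d => hA ▸ mul_rectDiag_mul_transpose_mulVec_dotProduct_le hU hV hσsq d) hB
    linarith

/-- Best rank-one approximation in Frobenius norm: `σ₁ u₁ v₁ᵀ` minimizes
`‖A − B‖²` over rank-one `B`, with minimum value `∑_{i=2}^p σᵢ²`. -/
theorem rank_one_frobenius_approx (m n : ℕ)
    (A : Matrix (Fin (m + 1)) (Fin (n + 1)) ℝ)
    (U : Matrix (Fin (m + 1)) (Fin (m + 1)) ℝ)
    (V : Matrix (Fin (n + 1)) (Fin (n + 1)) ℝ)
    (σ : ℕ → ℝ)
    (hU : Uᵀ * U = 1) (hV : Vᵀ * V = 1)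
    (hσnonneg : ∀ i, 0 ≤ σ i)
    (hσmono : ∀ i j, i ≤ j → σ j ≤ σ i)
    (hσzero : ∀ i, min (m + 1) (n + 1) ≤ i → σ i = 0)
    (hA : A = U * (Matrix.of fun (i : Fin (m + 1)) (j : Fin (n + 1)) => if (i : ℕ) = (j : ℕ) then σ i else 0) * Vᵀ)
    (hAne : A ≠ 0)
    (B₁ : Matrix (Fin (m + 1)) (Fin (n + 1)) ℝ)
    (hB₁ : B₁ = Matrix.of fun i j => σ 0 * U i 0 * V j 0) :
    rankOne B₁ ∧
    (∀ B : Matrix (Fin (m + 1)) (Fin (n + 1)) ℝ, rankOne B →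
      frobSq (A - B₁) ≤ frobSq (A - B)) ∧
    frobSq (A - B₁) = ∑ i ∈ Finset.Ico 1 (min (m + 1) (n + 1)), (σ i) ^ 2 :=
  rank_one_frobenius_approx_general m n A U V σ hU hV hσnonneg hσmono hA hAne B₁ hB₁
end
end

section
/- Van Loan–Pitsianis rearrangement identity: define the rearrangement operator R mapping a matrix A ∈ ℝ^{kp×kp}, partitioned into p×p blocks A_{lj} ∈ ℝ^{k×k}, to R(A) ∈ ℝ^{p²×k²} whose row indexed by (l,j) equals vec(A_{lj})ᵀ (rows ordered by stacking, for each j = 1,...,p, the rows l = 1,...,p). Then for all B ∈ ℝ^{p×p} and C ∈ ℝ^{k×k}: ‖A − B ⊗ C‖ = ‖R(A) − vec(B) vec(C)ᵀ‖. -/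
open Matrix Kronecker BigOperators

noncomputable section

/-- Frobenius norm of a real matrix. -/
def frobNorm {m n : Type*} [Fintype m] [Fintype n] (A : Matrix m n ℝ) : ℝ :=
  Real.sqrt (frobSq A)

/-- The Van Loan–Pitsianis rearrangement operator: the row of `R(A)` indexed by
`(l, j)` is the vectorization of the `(l, j)`-th `k × k` block of `A`. -/
def rearrange (p k : ℕ) (A : Matrix (Fin p × Fin k) (Fin p × Fin k) ℝ) :
    Matrix (Fin p × Fin p) (Fin k × Fin k) ℝ :=
  Matrix.of fun lj rs => A (lj.1, rs.1) (lj.2, rs.2)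

/-- Van Loan–Pitsianis identity: `‖A − B ⊗ C‖ = ‖R(A) − vec(B) vec(C)ᵀ‖`. -/
theorem rearrangement_identity (p k : ℕ)
    (A : Matrix (Fin p × Fin k) (Fin p × Fin k) ℝ)
    (B : Matrix (Fin p) (Fin p) ℝ) (C : Matrix (Fin k) (Fin k) ℝ) :
    frobNorm (A - B ⊗ₖ C) =
      frobNorm (rearrange p k A -
        Matrix.of fun (lj : Fin p × Fin p) (rs : Fin k × Fin k) =>
          B lj.1 lj.2 * C rs.1 rs.2) := by
  unfold frobNorm frobSq
  congr 1
  simp only [Fintype.sum_prod_type, rearrange, Matrix.sub_apply, Matrix.kroneckerMap_apply,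
    Matrix.of_apply]
  apply Finset.sum_congr rfl; intro l _
  exact Finset.sum_comm
end
end
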